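/- arXiv:1407.7342 — 4 statements merged into one kernel-verified Lean document; each statement's English description precedes it below -/
import Mathlib

section
/- Let n be a positive integer divisible by 4, and let E = {(x, x) : x ∈ {0,1}^n, W(x) = n/2} ∪ {(x, x̄) : x ∈ {0,1}^n, W(x) = n/2}. Let A, B ⊆ {0,1}^n be sets such that for every a ∈ A and b ∈ B the Hamming distance H(a,b) ≠ n/2, and let S = (A × B) ∩ E. Then for any two distinct pairs (x, x'), (y, y') ∈ S we have |x ∧ y| ≠ n/4. -/
/-- Hamming weight `W(x)`: number of indices where the bit string is 1 (`true`). -/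
def hamW {n : ℕ} (x : Fin n → Bool) : ℕ :=
  (Finset.univ.filter fun i => x i = true).card

/-- Hamming distance `H(x,y)`: number of indices where the two bit strings differ. -/
def hamD {n : ℕ} (x y : Fin n → Bool) : ℕ :=
  (Finset.univ.filter fun i => x i ≠ y i).card

/-- `|x ∧ y|`: number of indices where both bit strings are 1. -/
def hamAnd {n : ℕ} (x y : Fin n → Bool) : ℕ :=
  (Finset.univ.filter fun i => x i = true ∧ y i = true).card

lemma key_count {n : ℕ} (x y : Fin n → Bool) :
    hamD x y + 2 * hamAnd x y = hamW x + hamW y := by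
  unfold hamD hamAnd hamW
  rw [Finset.card_filter, Finset.card_filter, Finset.card_filter, Finset.card_filter,
    Finset.mul_sum, ← Finset.sum_add_distrib, ← Finset.sum_add_distrib]
  apply Finset.sum_congr rfl
  intro i _
  cases x i <;> cases y i <;> simp

lemma compl_count {n : ℕ} (x y : Fin n → Bool) :
    hamD x (fun i => !y i) + hamD x y = n := by
  unfold hamD
  rw [Finset.card_filter, Finset.card_filter, ← Finset.sum_add_distrib]
  have : ∀ i ∈ (Finset.univ : Finset (Fin n)),
      ((if x i ≠ !y i then 1 else 0) + (if x i ≠ y i then 1 else 0)) = 1 := by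
    intro i _
    cases x i <;> cases y i <;> simp
  rw [Finset.sum_congr rfl this]
  simp

theorem stmt1 (n : ℕ) (hn : 0 < n) (h4 : 4 ∣ n)
    (E : Set ((Fin n → Bool) × (Fin n → Bool)))
    (hE : E = ((fun x => (x, x)) '' {x | hamW x = n / 2}) ∪
              ((fun x => (x, fun i => !x i)) '' {x | hamW x = n / 2}))
    (A B : Set (Fin n → Bool))
    (hAB : ∀ a ∈ A, ∀ b ∈ B, hamD a b ≠ n / 2)
    (S : Set ((Fin n → Bool) × (Fin n → Bool)))
    (hS : S = (A ×ˢ B) ∩ E) :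
    ∀ p ∈ S, ∀ q ∈ S, p ≠ q → hamAnd p.1 q.1 ≠ n / 4 := by
  obtain ⟨k, rfl⟩ := h4
  intro p hp q hq hne habs
  rw [hS] at hp hq
  obtain ⟨hpAB, hpE⟩ := hp
  obtain ⟨hqAB, hqE⟩ := hq
  rw [hE] at hpE hqE
  -- weights
  have hwp : hamW p.1 = 4 * k / 2 := by
    rcases hpE with ⟨x, hx, hxe⟩ | ⟨x, hx, hxe⟩ <;> rw [← hxe] <;> exact hx
  have hwq : hamW q.1 = 4 * k / 2 := by
    rcases hqE with ⟨x, hx, hxe⟩ | ⟨x, hx, hxe⟩ <;> rw [← hxe] <;> exact hx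
  have hq2 : q.2 = q.1 ∨ q.2 = fun i => !q.1 i := by
    rcases hqE with ⟨x, hx, hxe⟩ | ⟨x, hx, hxe⟩ <;> rw [← hxe]
    · left; rfl
    · right; rfl
  have h2 : (4 * k) / 2 = 2 * k := by omega
  have h4' : (4 * k) / 4 = k := by omega
  rw [h2] at hwp hwq
  rw [h4'] at habs
  have hkey := key_count p.1 q.1
  rw [habs, hwp, hwq] at hkey
  have hD : hamD p.1 q.1 = 2 * k := by omega
  have hcompl := compl_count p.1 q.1
  rw [hD] at hcompl
  have hDc : hamD p.1 (fun i => !q.1 i) = 2 * k := by omega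
  have hBq : q.2 ∈ B := hqAB.2
  have := hAB p.1 hpAB.1 q.2 hBq
  rw [h2] at this
  rcases hq2 with h | h <;> rw [h] at this
  · exact this hD
  · exact this hDc
end

section
/- Let n = 4k + 2 with k ≥ 1. For each x ∈ {0,1}^n with W(x) = n/2 and x_n = 1, define x* ∈ {0,1}^n by x*_n = 1 and x*_i = 1 − x_i for i < n, and let E = {(x, x*) : x ∈ {0,1}^n, W(x) = n/2, x_n = 1}. Let A, B ⊆ {0,1}^n be sets such that for every a ∈ A and b ∈ B the Hamming distance H(a,b) ≠ n/2, and let S = (A × B) ∩ E. Then for any two distinct pairs (x, x*), (y, y*) ∈ S we have |x ∧ y| ≠ k + 1. -/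
/-- `x* `: keeps the last bit and flips all other bits. -/
def star {n : ℕ} (x : Fin n → Bool) : Fin n → Bool :=
  fun i => if i.val = n - 1 then true else !x i

lemma star_apply {n : ℕ} (x : Fin n → Bool) (i : Fin n) :
    star x i = if i.val = n - 1 then true else !x i := rfl

lemma key_identity {n : ℕ} (hn : 0 < n) (x y : Fin n → Bool)
    (hx : x ⟨n - 1, by omega⟩ = true) (hy : y ⟨n - 1, by omega⟩ = true) :
    hamD x (star y) + hamW x + hamW y + 1 = n + 2 * hamAnd x y := by
  classical
  have hlast : (Finset.univ.filter fun i : Fin n => i.val = n - 1).card = 1 := by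
    rw [Finset.card_eq_one]
    exact ⟨⟨n - 1, by omega⟩, by ext i; simp [Fin.ext_iff]⟩
  rw [Finset.card_filter] at hlast
  have hpt : ∀ i : Fin n,
      ((if x i ≠ star y i then 1 else 0) + (if x i = true then 1 else 0)
        + (if y i = true then 1 else 0) + (if i.val = n - 1 then 1 else 0))
      = 1 + 2 * (if x i = true ∧ y i = true then 1 else 0) := by
    intro i
    by_cases h : i.val = n - 1
    · have hi : i = ⟨n - 1, by omega⟩ := Fin.ext h
      rw [hi, star_apply]
      simp [hx, hy]
    · rw [star_apply, if_neg h]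
      cases hx' : x i <;> cases hy' : y i <;> simp [hx', hy', h]
  have hsum :
      (∑ i : Fin n, ((if x i ≠ star y i then 1 else 0) + (if x i = true then 1 else 0)
        + (if y i = true then 1 else 0) + (if i.val = n - 1 then 1 else 0)))
      = ∑ i : Fin n, (1 + 2 * (if x i = true ∧ y i = true then 1 else 0)) :=
    Finset.sum_congr rfl fun i _ => hpt i
  simp only [Finset.sum_add_distrib, Finset.sum_const, Finset.card_univ, Fintype.card_fin,
    smul_eq_mul, mul_one, ← Finset.mul_sum, hlast] at hsum
  unfold hamD hamW hamAnd
  rw [Finset.card_filter, Finset.card_filter, Finset.card_filter, Finset.card_filter]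
  omega

theorem stmt3 (n k : ℕ) (hk : 1 ≤ k) (hn : n = 4 * k + 2)
    (E : Set ((Fin n → Bool) × (Fin n → Bool)))
    (hE : E = (fun x => (x, star x)) ''
              {x | hamW x = n / 2 ∧ x ⟨n - 1, by omega⟩ = true})
    (A B : Set (Fin n → Bool))
    (hAB : ∀ a ∈ A, ∀ b ∈ B, hamD a b ≠ n / 2)
    (S : Set ((Fin n → Bool) × (Fin n → Bool)))
    (hS : S = (A ×ˢ B) ∩ E) :
    ∀ p ∈ S, ∀ q ∈ S, p ≠ q → hamAnd p.1 q.1 ≠ k + 1 := by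
  subst hn hE hS
  rintro p ⟨⟨hpA, hpB⟩, x, ⟨hxW, hxl⟩, hpx⟩ q ⟨⟨hqA, hqB⟩, y, ⟨hyW, hyl⟩, hqy⟩ hne hand
  have hpx1 : p.1 = x := by rw [← hpx]
  have hqy1 : q.1 = y := by rw [← hqy]
  have hqy2 : q.2 = star y := by rw [← hqy]
  rw [hpx1, hqy1] at hand
  have hkey := key_identity (by omega) x y hxl hyl
  have hd : hamD x (star y) = (4 * k + 2) / 2 := by omega
  exact hAB p.1 hpA q.2 hqB (by rw [hpx1, hqy2]; exact hd)
end

section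
/- Let n ≥ 1. In the complex Euclidean space with orthonormal standard basis {e_{(i,j)} : 0 ≤ i ≤ n, j = 0 or i < j ≤ n}, define for each 1 ≤ i ≤ n the vector v_i = (1/√n)(e_{(0,0)} + Σ_{j=i+1}^{n} e_{(i,j)} − Σ_{j=1}^{i−1} e_{(j,i)}). Then the family (v_1, …, v_n) is orthonormal: ⟨v_i, v_i⟩ = 1 for all i, and ⟨v_i, v_k⟩ = 0 for all i ≠ k. -/
/-- Valid basis indices: `(i,0)` for `0 ≤ i ≤ n` (this includes `(0,0)`), and
`(i,j)` for `1 ≤ i < j ≤ n`. -/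
def ValidIdx (n : ℕ) (p : Fin (n + 1) × Fin (n + 1)) : Prop :=
  p.2.val = 0 ∨ (1 ≤ p.1.val ∧ p.1.val < p.2.val)

instance (n : ℕ) : DecidablePred (ValidIdx n) := fun p => by
  unfold ValidIdx; infer_instance

/-- The index set of the orthonormal standard basis. -/
abbrev BIdx (n : ℕ) := {p : Fin (n + 1) × Fin (n + 1) // ValidIdx n p}

/-- The standard basis vector `e_{(a,b)}`. -/
noncomputable def e (n : ℕ) (a b : Fin (n + 1)) (h : ValidIdx n (a, b)) :
    EuclideanSpace ℂ (BIdx n) :=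
  EuclideanSpace.single ⟨(a, b), h⟩ 1

/-- `v_i = (1/√n)(e_{(0,0)} + Σ_{j=i+1}^{n} e_{(i,j)} − Σ_{j=1}^{i−1} e_{(j,i)})`. -/
noncomputable def v (n : ℕ) (i : Fin (n + 1)) (hi : 1 ≤ i.val) :
    EuclideanSpace ℂ (BIdx n) :=
  ((Real.sqrt n : ℂ))⁻¹ •
    (e n 0 0 (Or.inl rfl)
      + (∑ j : Fin (n + 1), if h : i.val < j.val then e n i j (Or.inr ⟨hi, h⟩) else 0)
      - (∑ j : Fin (n + 1), if h : 1 ≤ j.val ∧ j.val < i.val then e n j i (Or.inr h) else 0))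
/-!
Put `w_i := √n • v_i`. Apart from its coordinate `1` at `(0,0)`, `w_i` has coordinate
`δ_{a i} - δ_{b i}` at the edge `(a,b)`, `1 ≤ a < b ≤ n`: it is column `i` of the oriented incidence
matrix of the complete graph on `{1, …, n}`. Hence `⟪w_i, w_k⟫ = 1 + L_{k i}`, where
`L = n • 1 - J` is the Laplacian of that graph, and this is `n δ_{i k}`.
-/

open ComplexConjugate

-- Proofs built from these lemmas have type `ValidIdx n _` on the nose, unlike the anonymous
-- constructors in `v`, whose unfolded types make `simp` refuse to rewrite around them.
lemma ValidIdx.zero_zero {n : ℕ} : ValidIdx n (0, 0) := Or.inl rfl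

lemma ValidIdx.of_lt {n : ℕ} {a b : Fin (n + 1)} (ha : 1 ≤ a.val) (hab : a.val < b.val) :
    ValidIdx n (a, b) :=
  Or.inr ⟨ha, hab⟩

noncomputable def w (n : ℕ) (i : Fin (n + 1)) (hi : 1 ≤ i.val) : EuclideanSpace ℂ (BIdx n) :=
  e n 0 0 ValidIdx.zero_zero
    + (∑ j : Fin (n + 1), if h : i.val < j.val then e n i j (ValidIdx.of_lt hi h) else 0)
    - (∑ j : Fin (n + 1),
        if h : 1 ≤ j.val ∧ j.val < i.val then e n j i (ValidIdx.of_lt h.1 h.2) else 0)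

section

variable {n : ℕ}

lemma v_eq_smul_w (i : Fin (n + 1)) (hi : 1 ≤ i.val) :
    v n i hi = ((Real.sqrt n : ℂ))⁻¹ • w n i hi := rfl

lemma inner_e_right (a b : Fin (n + 1)) (h : ValidIdx n (a, b)) (x : EuclideanSpace ℂ (BIdx n)) :
    inner ℂ x (e n a b h) = conj (x ⟨(a, b), h⟩) := by
  simp [e, EuclideanSpace.inner_single_right]

lemma w_apply_zero (i : Fin (n + 1)) (hi : 1 ≤ i.val) :
    w n i hi ⟨(0, 0), ValidIdx.zero_zero⟩ = 1 := by
  have hi0 : (0 : Fin (n + 1)) ≠ i := by grind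
  simp [w, e, apply_dite (fun x : EuclideanSpace ℂ (BIdx n) => x _), Subtype.ext_iff,
    Prod.ext_iff, hi0]

lemma w_apply_of_lt (i a b : Fin (n + 1)) (hi : 1 ≤ i.val) (ha : 1 ≤ a.val) (hab : a.val < b.val) :
    w n i hi ⟨(a, b), ValidIdx.of_lt ha hab⟩
      = (if a = i then 1 else 0) - (if b = i then 1 else 0) := by
  have h_right : ∀ x : Fin (n + 1), (if i < x then if a = i ∧ b = x then (1 : ℂ) else 0 else 0)
      = if b = x then (if a = i then 1 else 0) else 0 := by
    intro x; split_ifs <;> grind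
  have h_left : ∀ x : Fin (n + 1),
      (if 1 ≤ x.val ∧ x < i then if a = x ∧ b = i then (1 : ℂ) else 0 else 0)
        = if a = x then (if b = i then 1 else 0) else 0 := by
    intro x; split_ifs <;> grind
  have hab0 : ¬ (a = 0 ∧ b = 0) := by grind
  simp [w, e, apply_dite (fun x : EuclideanSpace ℂ (BIdx n) => x _), Subtype.ext_iff,
    Prod.ext_iff, h_right, h_left, hab0]

lemma inner_w_right (k : Fin (n + 1)) (hk : 1 ≤ k.val) (x : EuclideanSpace ℂ (BIdx n)) :
    inner ℂ x (w n k hk) = conj (x ⟨(0, 0), ValidIdx.zero_zero⟩)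
      + (∑ j : Fin (n + 1),
          if h : k.val < j.val then conj (x ⟨(k, j), ValidIdx.of_lt hk h⟩) else 0)
      - (∑ j : Fin (n + 1),
          if h : 1 ≤ j.val ∧ j.val < k.val then conj (x ⟨(j, k), ValidIdx.of_lt h.1 h.2⟩)
          else 0) := by
  simp only [w, inner_add_right, inner_sub_right, inner_sum, apply_dite (inner ℂ x),
    inner_zero_right, inner_e_right]

lemma inner_w_w_eq_one_add_sum (i k : Fin (n + 1)) (hi : 1 ≤ i.val) (hk : 1 ≤ k.val) :
    inner ℂ (w n i hi) (w n k hk) = 1 + ∑ j : Fin (n + 1),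
      if 1 ≤ j.val ∧ j ≠ k then (if k = i then 1 else 0) - (if j = i then 1 else 0) else 0 := by
  simp (disch := omega) only [inner_w_right, w_apply_zero, w_apply_of_lt]
  simp only [map_one, map_sub, apply_ite conj, map_zero, dite_eq_ite]
  rw [add_sub_assoc, ← Finset.sum_sub_distrib]
  congr 1
  refine Finset.sum_congr rfl fun j _ => ?_
  split_ifs <;> grind

lemma sum_delta_sub_delta (i k : Fin (n + 1)) (hi : 1 ≤ i.val) :
    ∑ j : Fin (n + 1),
        (if 1 ≤ j.val ∧ j ≠ k then (if k = i then 1 else 0) - (if j = i then 1 else 0) else 0 : ℂ)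
      = if i = k then (n : ℂ) - 1 else -1 := by
  by_cases hik : i = k
  · subst hik
    simp only [if_true]
    have hterm : ∀ j : Fin (n + 1),
        (if 1 ≤ j.val ∧ j ≠ i then 1 - (if j = i then 1 else 0) else 0 : ℂ)
          = 1 - (if j = 0 then 1 else 0) - (if j = i then 1 else 0) := by
      intro j; split_ifs <;> grind
    simp only [hterm, Finset.sum_sub_distrib, Finset.sum_ite_eq', Finset.mem_univ, if_true,
      Finset.sum_const, Finset.card_univ, Fintype.card_fin]
    ring
  · have hterm : ∀ j : Fin (n + 1),
        (if 1 ≤ j.val ∧ j ≠ k then (if k = i then 1 else 0) - (if j = i then 1 else 0) else 0 : ℂ)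
          = if j = i then -1 else 0 := by
      intro j; split_ifs <;> grind
    simp [hik, hterm]

lemma inner_w_w (i k : Fin (n + 1)) (hi : 1 ≤ i.val) (hk : 1 ≤ k.val) :
    inner ℂ (w n i hi) (w n k hk) = if i = k then (n : ℂ) else 0 := by
  rw [inner_w_w_eq_one_add_sum, sum_delta_sub_delta i k hi]
  split_ifs <;> ring

lemma inner_v_v (i k : Fin (n + 1)) (hi : 1 ≤ i.val) (hk : 1 ≤ k.val) :
    inner ℂ (v n i hi) (v n k hk) = if i = k then 1 else 0 := by
  have hn : (n : ℂ) ≠ 0 := Nat.cast_ne_zero.mpr (by omega)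
  have hsqrt : ((Real.sqrt n : ℂ)) ^ 2 = n := by
    rw [← Complex.ofReal_pow, Real.sq_sqrt n.cast_nonneg, Complex.ofReal_natCast]
  rw [v_eq_smul_w, v_eq_smul_w, inner_smul_left, inner_smul_right, inner_w_w, map_inv₀,
    Complex.conj_ofReal]
  split_ifs
  · field_simp
    rw [hsqrt, div_self hn]
  · simp

end

theorem stmt7_general (n : ℕ) :
    (∀ (i : Fin (n + 1)) (hi : 1 ≤ i.val),
        (inner ℂ (v n i hi) (v n i hi) : ℂ) = 1) ∧
    (∀ (i k : Fin (n + 1)) (hi : 1 ≤ i.val) (hk : 1 ≤ k.val), i ≠ k →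
        (inner ℂ (v n i hi) (v n k hk) : ℂ) = 0) :=
  ⟨fun i hi => by simpa using inner_v_v i i hi hi,
    fun i k hi hk hik => by simpa [hik] using inner_v_v i k hi hk⟩

theorem stmt7 (n : ℕ) (hn : 1 ≤ n) :
    (∀ (i : Fin (n + 1)) (hi : 1 ≤ i.val),
        (inner ℂ (v n i hi) (v n i hi) : ℂ) = 1) ∧
    (∀ (i k : Fin (n + 1)) (hi : 1 ≤ i.val) (hk : 1 ≤ k.val), i ≠ k →
        (inner ℂ (v n i hi) (v n k hk) : ℂ) = 0) :=
  stmt7_general n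
end

section
/- Let n ≥ 1 and let a : Fin n → ℂ be any coefficients. In the complex Euclidean space with orthonormal standard basis {e_{(i,j)} : 0 ≤ i ≤ n, j = 0 or i < j ≤ n}, with v_i = (1/√n)(e_{(0,0)} + Σ_{j=i+1}^{n} e_{(i,j)} − Σ_{j=1}^{i−1} e_{(j,i)}) for 1 ≤ i ≤ n, the vector Σ_{i=1}^n a_i v_i equals ((Σ_{i=1}^n a_i)/√n) e_{(0,0)} + (1/√n) Σ_{1 ≤ i < j ≤ n} (a_i − a_j) e_{(i,j)}; in particular its coordinate at every index (i,0) with 1 ≤ i ≤ n is 0. -/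
/-! Expanding every `v_{i+1}`, the `e_{(0,0)}`-components add up to `(∑ a_i) e_{(0,0)}`, while
`e_{(i+1,j+1)}` with `i < j` receives `a_i` from `v_{i+1}` and `-a_j` from `v_{j+1}`; no `v_i` has
a component along `e_{(i,0)}` with `i ≥ 1`. -/

open Finset

lemma v_succ (n : ℕ) (i : Fin n) :
    v n i.succ (Nat.le_add_left 1 i.val) = ((Real.sqrt n : ℂ))⁻¹ •
      (e n 0 0 (Or.inl rfl)
        + (∑ j : Fin n, if h : i.val < j.val then
            e n i.succ j.succ (Or.inr ⟨Nat.le_add_left 1 i.val, Nat.succ_lt_succ h⟩) else 0)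
        - (∑ j : Fin n, if h : j.val < i.val then
            e n j.succ i.succ (Or.inr ⟨Nat.le_add_left 1 j.val, Nat.succ_lt_succ h⟩) else 0)) := by
  simp [v, Fin.sum_univ_succ]

lemma smul_v_succ (n : ℕ) (c : ℂ) (i : Fin n) :
    c • v n i.succ (Nat.le_add_left 1 i.val) = ((Real.sqrt n : ℂ))⁻¹ •
      (c • e n 0 0 (Or.inl rfl)
        + (∑ j : Fin n, if h : i.val < j.val then
            c • e n i.succ j.succ (Or.inr ⟨Nat.le_add_left 1 i.val, Nat.succ_lt_succ h⟩) else 0)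
        - (∑ j : Fin n, if h : j.val < i.val then
            c • e n j.succ i.succ (Or.inr ⟨Nat.le_add_left 1 j.val, Nat.succ_lt_succ h⟩) else 0)) := by
  rw [v_succ, smul_comm, smul_sub, smul_add, smul_sum, smul_sum]
  simp only [smul_dite, smul_zero]

theorem sum_smul_v_succ (n : ℕ) (a : Fin n → ℂ) :
    (∑ i : Fin n, a i • v n i.succ (Nat.le_add_left 1 i.val)) =
      ((∑ i : Fin n, a i) / (Real.sqrt n : ℂ)) • e n 0 0 (Or.inl rfl)
        + ((Real.sqrt n : ℂ))⁻¹ •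
            ∑ i : Fin n, ∑ j : Fin n,
              if h : i.val < j.val then
                (a i - a j) • e n i.succ j.succ
                  (Or.inr ⟨Nat.le_add_left 1 i.val, Nat.succ_lt_succ h⟩)
              else 0 := by
  simp only [smul_v_succ, ← smul_sum, sum_add_distrib, sum_sub_distrib]
  have reindex : (∑ i : Fin n, ∑ j : Fin n, if h : j.val < i.val then
        a i • e n j.succ i.succ (Or.inr ⟨Nat.le_add_left 1 j.val, Nat.succ_lt_succ h⟩) else 0) =
      ∑ i : Fin n, ∑ j : Fin n, if h : i.val < j.val then
        a j • e n i.succ j.succ (Or.inr ⟨Nat.le_add_left 1 i.val, Nat.succ_lt_succ h⟩) else 0 :=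
    sum_comm
  rw [reindex, add_sub_assoc, ← sum_sub_distrib, smul_add, ← sum_smul, div_eq_inv_mul, mul_smul]
  simp only [← sum_sub_distrib, dite_sub_dite, sub_zero, sub_smul]

theorem stmt9_general (n : ℕ) (a : Fin n → ℂ) :
    ((∑ i : Fin n, a i • v n i.succ (Nat.le_add_left 1 i.val)) =
      ((∑ i : Fin n, a i) / (Real.sqrt n : ℂ)) • e n 0 0 (Or.inl rfl)
        + ((Real.sqrt n : ℂ))⁻¹ •
            ∑ i : Fin n, ∑ j : Fin n,
              if h : i.val < j.val then
                (a i - a j) • e n i.succ j.succ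
                  (Or.inr ⟨Nat.le_add_left 1 i.val, Nat.succ_lt_succ h⟩)
              else 0)
    ∧ (∀ (i : Fin (n + 1)), 1 ≤ i.val →
        (∑ i' : Fin n, a i' • v n i'.succ (Nat.le_add_left 1 i'.val))
          ⟨(i, 0), Or.inl rfl⟩ = 0) := by
  refine ⟨sum_smul_v_succ n a, fun i hi => ?_⟩
  have hi0 : i ≠ 0 := Fin.pos_iff_ne_zero.mp hi
  rw [sum_smul_v_succ]
  simp [e, WithLp.ofLp_sum, Subtype.ext_iff, hi0,
    apply_dite (fun y : EuclideanSpace ℂ (BIdx n) => y ⟨(i, 0), Or.inl rfl⟩)]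

theorem stmt9 (n : ℕ) (hn : 1 ≤ n) (a : Fin n → ℂ) :
    ((∑ i : Fin n, a i • v n i.succ (Nat.le_add_left 1 i.val)) =
      ((∑ i : Fin n, a i) / (Real.sqrt n : ℂ)) • e n 0 0 (Or.inl rfl)
        + ((Real.sqrt n : ℂ))⁻¹ •
            ∑ i : Fin n, ∑ j : Fin n,
              if h : i.val < j.val then
                (a i - a j) • e n i.succ j.succ
                  (Or.inr ⟨Nat.le_add_left 1 i.val, Nat.succ_lt_succ h⟩)
              else 0)
    ∧ (∀ (i : Fin (n + 1)), 1 ≤ i.val →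
        (∑ i' : Fin n, a i' • v n i'.succ (Nat.le_add_left 1 i'.val))
          ⟨(i, 0), Or.inl rfl⟩ = 0) :=
  stmt9_general n a
end
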